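/- arXiv:2604.01041 — 2 statements merged into one kernel-verified Lean document; each statement's English description precedes it below -/
import Mathlib

section
/- Let X be a type, R ⊆ X a set of 'red' elements, and suc : X → X a function such that for every x ∉ R there exists k ≥ 1 with suc^[k](x) ∈ R (every non-red element reaches R under iteration of suc). Define F : (X → {0,1}) → (X → {0,1}) by F(L)(x) = L(x) if x ∈ R, and F(L)(x) = L(x) ⊕ L(suc(x)) if x ∉ R. Then F is injective. -/
/-! Since `a ⊕ b` determines `a` once `b` is known, the old label of a blue cell is recovered
from its new label and the old label of its successor. Red cells keep their labels, so all labels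
are recovered by walking each chain back from its red end. -/

theorem Function.iterate_mem_induction {α : Type*} {f : α → α} {s : Set α} {p : α → Prop}
    (hs : ∀ x ∈ s, p x) (hf : ∀ x ∉ s, p (f x) → p x) :
    ∀ (k : ℕ) (x : α), f^[k] x ∈ s → p x
  | 0, x, hx => hs x hx
  | k + 1, x, hx => by
    by_cases h : x ∈ s
    · exact hs x h
    · exact hf x h (iterate_mem_induction hs hf k (f x) hx)

open scoped Classical in
/-- Let `R ⊆ X` be the red elements and `suc : X → X` such
that every non-red element reaches `R` under iteration of `suc`.  Then the map
`F(L)(x) = L(x)` for `x ∈ R`, `F(L)(x) = L(x) ⊕ L(suc x)` for `x ∉ R`,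
is injective. -/
theorem stmt_13 (X : Type*) (R : Set X) (suc : X → X)
    (hreach : ∀ x ∉ R, ∃ k : ℕ, 1 ≤ k ∧ suc^[k] x ∈ R)
    (F : (X → Bool) → (X → Bool))
    (hF : ∀ (L : X → Bool) (x : X),
      F L x = if x ∈ R then L x else Bool.xor (L x) (L (suc x))) :
    Function.Injective F := by
  intro L₁ L₂ h
  have hred : ∀ x ∈ R, L₁ x = L₂ x := fun x hx => by
    simpa only [hF, if_pos hx] using congrFun h x
  have hblue : ∀ x ∉ R, L₁ (suc x) = L₂ (suc x) → L₁ x = L₂ x := fun x hx hsuc => by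
    have hx' := congrFun h x
    rw [hF, hF, if_neg hx, if_neg hx, hsuc] at hx'
    exact Bool.xor_left_inj.mp hx'
  funext x
  by_cases hx : x ∈ R
  · exact hred x hx
  · obtain ⟨k, -, hk⟩ := hreach x hx
    exact Function.iterate_mem_induction hred hblue k x hk
end

section
/- Fix odd n ≥ 1 and m ≥ 1, and define suc on the rectangle [n+1]×[m+2] (where [k] = {0,…,k−1}) by: suc(i,j) = (i,j+1) if (i,j) = (0,0) or (i is even and 1 ≤ j ≤ m); suc(i,j) = (i,j−1) if (i,j) = (n,1) or (i is odd and 2 ≤ j ≤ m+1); suc(i,j) = (i+1,j) if (i is odd, j = 1 and i ≠ n) or (i is even and j = m+1); suc(i,j) = (i−1,j) if i ≥ 1 and j = 0. Then (a) suc maps [n+1]×[m+2] into itself and suc(i,j) is always a von Neumann neighbour of (i,j) (it differs from (i,j) by exactly 1 in exactly one coordinate); and (b) suc acts on [n+1]×[m+2] as a single cyclic permutation: for all cells c, c′ ∈ [n+1]×[m+2] there exists k ≥ 0 with suc^[k](c) = c′. -/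
/-- The position `p` lies inside the rectangle `[n+1] × [m+2]`. -/
def insideRect (n m : ℕ) (p : ℤ × ℤ) : Prop :=
  0 ≤ p.1 ∧ p.1 ≤ (n : ℤ) ∧ 0 ≤ p.2 ∧ p.2 ≤ (m : ℤ) + 1

open scoped Classical in
/-- The snake-like successor map on the rectangle `[n+1] × [m+2]`. -/
noncomputable def sucMap (n m : ℕ) (p : ℤ × ℤ) : ℤ × ℤ :=
  if p = (0, 0) ∨ (Even p.1 ∧ 1 ≤ p.2 ∧ p.2 ≤ (m : ℤ)) then (p.1, p.2 + 1)
  else if p = ((n : ℤ), 1) ∨ (Odd p.1 ∧ 2 ≤ p.2 ∧ p.2 ≤ (m : ℤ) + 1) then (p.1, p.2 - 1)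
  else if (Odd p.1 ∧ p.2 = 1 ∧ p.1 ≠ (n : ℤ)) ∨ (Even p.1 ∧ p.2 = (m : ℤ) + 1) then
    (p.1 + 1, p.2)
  else (p.1 - 1, p.2)

/-!
Reachability under iteration of `sucMap` is transitive, so it suffices that every cell of the
rectangle reaches the corner `(0, 0)` and is reached from it. Both are walks along the snake:
each row is traversed in the direction given by the parity of its index, the turns happen at
columns `1` and `m + 1`, and since `n` is odd the last row ends at `(n, 1)`, from where column
`0` leads back up to `(0, 0)`.
-/

open Relation

theorem exists_iterate_eq_of_reflTransGen {α : Type*} {f : α → α} {a b : α}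
    (h : ReflTransGen (fun x y => f x = y) a b) : ∃ k, f^[k] a = b := by
  induction h with
  | refl => exact ⟨0, rfl⟩
  | tail _ hbc ih =>
    obtain ⟨k, rfl⟩ := ih
    exact ⟨k + 1, by rw [Function.iterate_succ_apply', hbc]⟩

theorem reflTransGen_of_int_chain {α : Type*} {r : α → α → Prop} (g : ℤ → α) {a b : ℤ}
    (hab : a ≤ b) (h : ∀ t, a ≤ t → t < b → r (g t) (g (t + 1))) :
    ReflTransGen r (g a) (g b) := by
  induction b, hab using Int.leInduction with
  | base => exact .refl
  | succ b hab ih => exact (ih fun t h₁ h₂ => h t h₁ (by omega)).tail (h b hab (by omega))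

theorem reflTransGen_of_int_chain_down {α : Type*} {r : α → α → Prop} (g : ℤ → α) {a b : ℤ}
    (hab : a ≤ b) (h : ∀ t, a < t → t ≤ b → r (g t) (g (t - 1))) :
    ReflTransGen r (g b) (g a) := by
  induction a, hab using Int.leInductionDown with
  | base => exact .refl
  | pred a hab ih => exact (ih fun t h₁ h₂ => h t (by omega) h₂).tail (h a (by omega) hab)

section Snake

variable {n m : ℕ} {i j : ℤ}

theorem sucMap_zero_zero : sucMap n m (0, 0) = (0, 1) := by
  simp [sucMap]

theorem sucMap_of_even (hi : Even i) (h₁ : 1 ≤ j) (h₂ : j ≤ m) : sucMap n m (i, j) = (i, j + 1) :=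
  if_pos (Or.inr ⟨hi, h₁, h₂⟩)

theorem sucMap_of_odd (hi : Odd i) (h₁ : 2 ≤ j) (h₂ : j ≤ m + 1) :
    sucMap n m (i, j) = (i, j - 1) := by
  rw [sucMap, if_neg, if_pos (Or.inr ⟨hi, h₁, h₂⟩)]
  rintro (h | ⟨h, -⟩)
  · simp only [Prod.ext_iff] at h; omega
  · exact Int.not_even_iff_odd.2 hi h

theorem sucMap_natCast_one (hn : Odd (n : ℤ)) : sucMap n m (n, 1) = ((n : ℤ), 0) := by
  rw [sucMap, if_neg, if_pos (Or.inl rfl)]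
  · simp
  rintro (h | ⟨h, -⟩)
  · simp [Prod.ext_iff] at h
  · exact Int.not_even_iff_odd.2 hn h

theorem sucMap_of_odd_one (hi : Odd i) (hin : i ≠ n) : sucMap n m (i, 1) = (i + 1, 1) := by
  rw [sucMap, if_neg, if_neg, if_pos (Or.inl ⟨hi, rfl, hin⟩)]
  · rintro (h | ⟨-, h, -⟩)
    · simp only [Prod.ext_iff] at h; omega
    · omega
  · rintro (h | ⟨h, -⟩)
    · simp [Prod.ext_iff] at h
    · exact Int.not_even_iff_odd.2 hi h

theorem sucMap_of_even_last_col (hn : Odd (n : ℤ)) (hi : Even i) :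
    sucMap n m (i, (m : ℤ) + 1) = (i + 1, (m : ℤ) + 1) := by
  rw [sucMap, if_neg, if_neg, if_pos (Or.inr ⟨hi, rfl⟩)]
  · rintro (h | ⟨h, -⟩)
    · simp only [Prod.ext_iff] at h
      exact Int.not_even_iff_odd.2 hn (h.1 ▸ hi)
    · exact Int.not_even_iff_odd.2 h hi
  · rintro (h | ⟨-, -, h⟩)
    · simp only [Prod.ext_iff] at h; omega
    · omega

theorem sucMap_col_zero (hi : i ≠ 0) : sucMap n m (i, 0) = (i - 1, 0) := by
  have hm : (0 : ℤ) ≠ m + 1 := by omega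
  simp [sucMap, Prod.ext_iff, hi, hm]

theorem sucMap_eq_neighbour (p : ℤ × ℤ) :
    sucMap n m p = (p.1, p.2 + 1) ∨ sucMap n m p = (p.1, p.2 - 1) ∨
      sucMap n m p = (p.1 + 1, p.2) ∨ sucMap n m p = (p.1 - 1, p.2) := by
  unfold sucMap
  split_ifs <;> simp

theorem insideRect_sucMap (hn : Odd (n : ℤ)) {p : ℤ × ℤ} (hp : insideRect n m p) :
    insideRect n m (sucMap n m p) := by
  obtain ⟨i, j⟩ := p
  rw [Int.odd_iff] at hn
  unfold sucMap insideRect at *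
  split_ifs <;> simp only [Prod.ext_iff, Int.even_iff, Int.odd_iff] at * <;> omega

abbrev SucReach (n m : ℕ) : ℤ × ℤ → ℤ × ℤ → Prop :=
  ReflTransGen fun x y => sucMap n m x = y

theorem sucReach_row_of_even (hi : Even i) {j' : ℤ} (h₁ : 1 ≤ j) (hj : j ≤ j') (h₂ : j' ≤ m + 1) :
    SucReach n m (i, j) (i, j') :=
  reflTransGen_of_int_chain (fun t => (i, t)) hj fun t ht₁ ht₂ =>
    sucMap_of_even hi (by omega) (by omega)

theorem sucReach_row_of_odd (hi : Odd i) {j' : ℤ} (h₁ : 1 ≤ j') (hj : j' ≤ j) (h₂ : j ≤ m + 1) :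
    SucReach n m (i, j) (i, j') :=
  reflTransGen_of_int_chain_down (fun t => (i, t)) hj fun t ht₁ ht₂ =>
    sucMap_of_odd hi (by omega) (by omega)

theorem sucReach_col_zero {i' : ℤ} (h₀ : 0 ≤ i') (hi : i' ≤ i) :
    SucReach n m (i, 0) (i', 0) :=
  reflTransGen_of_int_chain_down (fun t => (t, 0)) hi fun t ht₁ _ =>
    sucMap_col_zero (by omega)

theorem sucReach_natCast_one (hn : Odd (n : ℤ)) (hi : i ≤ n) (h₁ : 1 ≤ j) (h₂ : j ≤ m + 1) :
    SucReach n m (i, j) (n, 1) := by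
  induction i, hi using Int.leInductionDown generalizing j with
  | base =>
    exact sucReach_row_of_odd hn le_rfl h₁ h₂
  | pred i hi ih =>
    rcases Int.even_or_odd (i - 1) with he | ho
    · exact (sucReach_row_of_even he h₁ h₂ le_rfl).trans <|
        .head (by rw [sucMap_of_even_last_col hn he, sub_add_cancel]) (ih (by omega) le_rfl)
    · exact (sucReach_row_of_odd ho le_rfl h₁ h₂).trans <|
        .head (by rw [sucMap_of_odd_one ho (by omega), sub_add_cancel]) (ih le_rfl (by omega))

theorem sucReach_zero_zero_of_insideRect (hn : Odd (n : ℤ)) {c : ℤ × ℤ} (hc : insideRect n m c) :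
    SucReach n m c (0, 0) := by
  obtain ⟨i, j⟩ := c
  obtain ⟨hi₀, hin, hj₀, hjm⟩ := hc
  obtain rfl | hj := eq_or_lt_of_le hj₀
  · exact sucReach_col_zero le_rfl hi₀
  · exact (sucReach_natCast_one hn hin hj hjm).trans <|
      .head (sucMap_natCast_one hn) (sucReach_col_zero le_rfl (by omega))

theorem sucReach_of_zero_zero (hn : Odd (n : ℤ)) (hi₀ : 0 ≤ i) (hin : i ≤ n) (h₁ : 1 ≤ j)
    (h₂ : j ≤ m + 1) : SucReach n m (0, 0) (i, j) := by
  induction i, hi₀ using Int.leInduction generalizing j with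
  | base =>
    exact .head sucMap_zero_zero (sucReach_row_of_even .zero le_rfl h₁ h₂)
  | succ i hi₀ ih =>
    rcases Int.even_or_odd i with he | ho
    · exact (ih (by omega) (by omega) le_rfl).tail (sucMap_of_even_last_col hn he) |>.trans <|
        sucReach_row_of_odd he.add_one h₁ h₂ le_rfl
    · exact (ih (by omega) le_rfl (by omega)).tail (sucMap_of_odd_one ho (by omega)) |>.trans <|
        sucReach_row_of_even ho.add_one le_rfl h₁ h₂

theorem sucReach_of_insideRect (hn : Odd (n : ℤ)) {c : ℤ × ℤ} (hc : insideRect n m c) :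
    SucReach n m (0, 0) c := by
  obtain ⟨i, j⟩ := c
  obtain ⟨hi₀, hin, hj₀, hjm⟩ := hc
  obtain rfl | hj := eq_or_lt_of_le hj₀
  · exact (sucReach_of_zero_zero hn (Int.natCast_nonneg n) le_rfl le_rfl (by omega)).tail
      (sucMap_natCast_one hn) |>.trans (sucReach_col_zero hi₀ hin)
  · exact sucReach_of_zero_zero hn hi₀ hin hj hjm

end Snake

theorem stmt_14_general (n m : ℕ) (hnodd : Odd n) :
    (∀ p : ℤ × ℤ, insideRect n m p →
      insideRect n m (sucMap n m p) ∧
      (sucMap n m p = (p.1, p.2 + 1) ∨ sucMap n m p = (p.1, p.2 - 1) ∨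
       sucMap n m p = (p.1 + 1, p.2) ∨ sucMap n m p = (p.1 - 1, p.2))) ∧
    (∀ c c' : ℤ × ℤ, insideRect n m c → insideRect n m c' →
      ∃ k : ℕ, (sucMap n m)^[k] c = c') := by
  have hn : Odd (n : ℤ) := hnodd.natCast
  refine ⟨fun p hp => ⟨insideRect_sucMap hn hp, sucMap_eq_neighbour p⟩, fun c c' hc hc' => ?_⟩
  exact exists_iterate_eq_of_reflTransGen <|
    (sucReach_zero_zero_of_insideRect hn hc).trans (sucReach_of_insideRect hn hc')

/-- For odd `n ≥ 1` and `m ≥ 1`: (a) `suc` maps the rectangle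
`[n+1] × [m+2]` into itself and always moves to a von Neumann neighbour
(it changes exactly one coordinate by exactly `1`); (b) `suc` acts on the
rectangle as a single cyclic permutation: any cell reaches any other cell by
iterating `suc`. -/
theorem stmt_14 (n m : ℕ) (hn : 1 ≤ n) (hnodd : Odd n) (hm : 1 ≤ m) :
    (∀ p : ℤ × ℤ, insideRect n m p →
      insideRect n m (sucMap n m p) ∧
      (sucMap n m p = (p.1, p.2 + 1) ∨ sucMap n m p = (p.1, p.2 - 1) ∨
       sucMap n m p = (p.1 + 1, p.2) ∨ sucMap n m p = (p.1 - 1, p.2))) ∧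
    (∀ c c' : ℤ × ℤ, insideRect n m c → insideRect n m c' →
      ∃ k : ℕ, (sucMap n m)^[k] c = c') :=
  stmt_14_general n m hnodd
end
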